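/- arXiv:1612.06571 — 7 statements merged into one kernel-verified Lean document; each statement's English description precedes it below -/
import Mathlib

section
/- Let w be a design on v treatments, let M_τ = diag(w) − w wᵀ, and let Q be a real v×s matrix with Qᵀ 1_v = 0_s. Then every column of Q lies in the column space of M_τ, and for every generalized inverse G of M_τ (i.e., every real v×v matrix G with M_τ G M_τ = M_τ) one has Qᵀ G Q = Qᵀ diag(w)⁻¹ Q. -/
open Matrix

/-- For a design `w`, `M_τ = diag(w) - w wᵀ`, and a contrast matrix `Q`
(`Qᵀ 1 = 0`), every column of `Q` lies in the column space of `M_τ`, and for every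
generalized inverse `G` of `M_τ` one has `Qᵀ G Q = Qᵀ diag(w)⁻¹ Q`. -/
theorem stmt_1 (v s : ℕ) (Q : Matrix (Fin v) (Fin s) ℝ)
    (w : Fin v → ℝ) (hw : ∀ i, 0 < w i) (hw1 : ∑ i, w i = 1)
    (hQ : Qᵀ *ᵥ (fun _ => (1 : ℝ)) = 0) :
    (∀ j : Fin s, ∃ x : Fin v → ℝ,
        (Matrix.diagonal w - Matrix.vecMulVec w w) *ᵥ x = fun i => Q i j) ∧
    (∀ G : Matrix (Fin v) (Fin v) ℝ,
        (Matrix.diagonal w - Matrix.vecMulVec w w) * G *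
            (Matrix.diagonal w - Matrix.vecMulVec w w)
          = Matrix.diagonal w - Matrix.vecMulVec w w →
        Qᵀ * G * Q = Qᵀ * (Matrix.diagonal w)⁻¹ * Q) := by
  set M := Matrix.diagonal w - Matrix.vecMulVec w w with hMdef
  set X := Matrix.diagonal (fun i => (w i)⁻¹) * Q with hXdef
  have hwne : ∀ i, w i ≠ 0 := fun i => (hw i).ne'
  have hcol : ∀ j, ∑ i, Q i j = 0 := by
    intro j
    have := congrFun hQ j
    simpa [Matrix.mulVec, dotProduct, Matrix.transpose] using this
  have h1 : Matrix.diagonal w * Matrix.diagonal (fun i => (w i)⁻¹) = 1 := by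
    rw [Matrix.diagonal_mul_diagonal]
    have : (fun i => w i * (w i)⁻¹) = fun _ : Fin v => (1 : ℝ) :=
      funext fun i => mul_inv_cancel₀ (hwne i)
    rw [this, Matrix.diagonal_one]
  have h2 : Matrix.vecMulVec w w * X = 0 := by
    ext i k
    rw [Matrix.mul_apply]
    simp only [hXdef, Matrix.vecMulVec_apply, Matrix.diagonal_mul, Matrix.zero_apply]
    rw [Finset.sum_congr rfl (fun j _ =>
      show w i * w j * ((w j)⁻¹ * Q j k) = w i * Q j k by rw [mul_assoc, mul_inv_cancel_left₀ (hwne j)]),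
      ← Finset.mul_sum, hcol k, mul_zero]
  have hMX : M * X = Q := by
    rw [hMdef, Matrix.sub_mul, h2, sub_zero, hXdef, ← Matrix.mul_assoc, h1, Matrix.one_mul]
  have hMT : Mᵀ = M := by
    rw [hMdef, Matrix.transpose_sub, Matrix.diagonal_transpose]
    congr 1
    ext i j
    simp [Matrix.vecMulVec_apply, mul_comm]
  constructor
  · intro j
    refine ⟨fun i => (w i)⁻¹ * Q i j, ?_⟩
    have : (fun i => (w i)⁻¹ * Q i j) = X *ᵥ Pi.single j 1 := by
      funext i
      simp [hXdef, Matrix.mulVec, dotProduct, Matrix.mul_apply, Pi.single_apply,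
        Matrix.diagonal_apply, Finset.sum_ite_eq, mul_comm]
    rw [this, Matrix.mulVec_mulVec, hMX]
    funext i
    simp [Matrix.mulVec, dotProduct, Pi.single_apply]
  · intro G hG
    calc Qᵀ * G * Q = (M * X)ᵀ * G * (M * X) := by rw [hMX]
      _ = Xᵀ * (M * G * M) * X := by
          rw [Matrix.transpose_mul, hMT]
          simp only [Matrix.mul_assoc]
      _ = Xᵀ * M * X := by rw [hG, Matrix.mul_assoc]
      _ = Xᵀ * Q := by rw [Matrix.mul_assoc, hMX]
      _ = Qᵀ * (Matrix.diagonal w)⁻¹ * Q := by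
          rw [hXdef, Matrix.transpose_mul, Matrix.diagonal_transpose,
            Matrix.inv_eq_right_inv h1]
end

section
/- Let A be a real symmetric v×v matrix satisfying A 1_v = 0_v. For i, j ∈ {1,…,v} let A_{ij} denote the (v−1)×(v−1) matrix obtained from A by deleting its i-th row and j-th column. Then det(A_{ij}) = (−1)^{i+j} det(A_{11}) for all i, j ∈ {1,…,v}. -/
open Matrix

private lemma rank_submatrix_le'' {n : ℕ} (A : Matrix (Fin (n + 1)) (Fin (n + 1)) ℝ)
    (f g : Fin n → Fin (n + 1)) : (A.submatrix f g).rank ≤ A.rank := by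
  have h2 : A * ((1 : Matrix (Fin (n+1)) (Fin (n+1)) ℝ).submatrix ⇑(Equiv.refl (Fin (n+1))) g)
      = A.submatrix id g := by
    rw [mul_submatrix_one]; rfl
  have h3 : ((1 : Matrix (Fin (n+1)) (Fin (n+1)) ℝ).submatrix f ⇑(Equiv.refl (Fin (n+1))))
      * (A.submatrix id g) = A.submatrix f g := by
    rw [one_submatrix_mul]
    simp [submatrix_submatrix]
  calc (A.submatrix f g).rank
      = (((1 : Matrix (Fin (n+1)) (Fin (n+1)) ℝ).submatrix f ⇑(Equiv.refl (Fin (n+1))))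
        * (A.submatrix id g)).rank := by rw [h3]
    _ ≤ (A.submatrix id g).rank := rank_mul_le_right _ _
    _ = (A * ((1 : Matrix (Fin (n+1)) (Fin (n+1)) ℝ).submatrix ⇑(Equiv.refl (Fin (n+1))) g)).rank := by rw [h2]
    _ ≤ A.rank := rank_mul_le_left _ _

private lemma adj_const {n : ℕ} (A : Matrix (Fin (n + 1)) (Fin (n + 1)) ℝ)
    (hA : Aᵀ = A) (h1 : A *ᵥ (fun _ => (1 : ℝ)) = 0) (i j : Fin (n + 1)) :
    adjugate A i j = adjugate A 0 0 := by
  have hone : (fun _ => (1 : ℝ) : Fin (n+1) → ℝ) ≠ 0 := by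
    intro h
    have := congrFun h 0
    simpa using this
  have hdet : A.det = 0 := by
    rw [← Matrix.exists_mulVec_eq_zero_iff]
    exact ⟨_, hone, h1⟩
  have hker : (fun _ => (1 : ℝ) : Fin (n+1) → ℝ) ∈ LinearMap.ker A.mulVecLin := by
    simpa [Matrix.mulVecLin_apply] using h1
  have hspan : Submodule.span ℝ {(fun _ => (1 : ℝ) : Fin (n+1) → ℝ)} ≤ LinearMap.ker A.mulVecLin := by
    rwa [Submodule.span_singleton_le_iff_mem]
  have hrn : A.rank + Module.finrank ℝ (LinearMap.ker A.mulVecLin) = n + 1 := by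
    have := LinearMap.finrank_range_add_finrank_ker A.mulVecLin
    simpa [Matrix.rank] using this
  have hky : 1 ≤ Module.finrank ℝ (LinearMap.ker A.mulVecLin) := by
    have h1' : Module.finrank ℝ (Submodule.span ℝ {(fun _ => (1 : ℝ) : Fin (n+1) → ℝ)}) = 1 :=
      finrank_span_singleton hone
    calc 1 = Module.finrank ℝ (Submodule.span ℝ {(fun _ => (1 : ℝ) : Fin (n+1) → ℝ)}) := h1'.symm
      _ ≤ Module.finrank ℝ (LinearMap.ker A.mulVecLin) := Submodule.finrank_mono hspan
  rcases lt_or_eq_of_le (Nat.le_of_lt_succ (by omega : A.rank < n + 1)) with hlt | heq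
  · -- rank < n : adjugate is zero
    have hz : ∀ a b : Fin (n+1), adjugate A a b = 0 := by
      intro a b
      rw [Matrix.adjugate_fin_succ_eq_det_submatrix]
      have hzz : (A.submatrix b.succAbove a.succAbove).det = 0 := by
        by_contra hne
        have hu : IsUnit (A.submatrix b.succAbove a.succAbove) := by
          rw [Matrix.isUnit_iff_isUnit_det]
          exact isUnit_iff_ne_zero.mpr hne
        have := Matrix.rank_of_isUnit _ hu
        have hle := rank_submatrix_le'' A b.succAbove a.succAbove
        rw [this] at hle
        simp [Fintype.card_fin] at hle
        omega
      rw [hzz, mul_zero]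
    rw [hz, hz]
  · -- rank = n : kernel is one-dimensional, spanned by 1
    have hkerfin : Module.finrank ℝ (LinearMap.ker A.mulVecLin) = 1 := by omega
    have hkereq : Submodule.span ℝ {(fun _ => (1 : ℝ) : Fin (n+1) → ℝ)}
        = LinearMap.ker A.mulVecLin := by
      apply Submodule.eq_of_le_of_finrank_le hspan
      rw [hkerfin, finrank_span_singleton hone]
    -- columns of adjugate are constant
    have hcol : ∀ a b c : Fin (n+1), adjugate A a c = adjugate A b c := by
      intro a b c
      have hAadj : A * adjugate A = 0 := by
        rw [Matrix.mul_adjugate, hdet, zero_smul]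
      have hmem : (fun k => adjugate A k c) ∈ LinearMap.ker A.mulVecLin := by
        rw [LinearMap.mem_ker, Matrix.mulVecLin_apply]
        funext k
        have := congrFun (congrFun hAadj k) c
        simpa [Matrix.mul_apply, Matrix.mulVec, dotProduct] using this
      rw [← hkereq] at hmem
      rcases Submodule.mem_span_singleton.mp hmem with ⟨d, hd⟩
      have ha := congrFun hd a
      have hb := congrFun hd b
      simp only [Pi.smul_apply, smul_eq_mul, mul_one] at ha hb
      rw [← ha, ← hb]
    have hsym : adjugate A j 0 = adjugate A 0 j := by
      have := Matrix.adjugate_transpose A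
      rw [hA] at this
      have := congrFun (congrFun this j) 0
      simpa [Matrix.transpose_apply] using this.symm
    calc adjugate A i j = adjugate A 0 j := hcol i 0 j
      _ = adjugate A j 0 := hsym.symm
      _ = adjugate A 0 0 := hcol j 0 0

/-- If `A` is a real symmetric matrix with `A 1 = 0`, then all its first
minors agree up to sign: `det(A_{ij}) = (-1)^{i+j} det(A_{11})`, where `A_{ij}` deletes
row `i` and column `j`. -/
theorem stmt_2 (n : ℕ) (A : Matrix (Fin (n + 1)) (Fin (n + 1)) ℝ)
    (hA : Aᵀ = A) (h1 : A *ᵥ (fun _ => (1 : ℝ)) = 0)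
    (i j : Fin (n + 1)) :
    (A.submatrix i.succAbove j.succAbove).det
      = (-1 : ℝ) ^ ((i : ℕ) + (j : ℕ)) *
        (A.submatrix (0 : Fin (n + 1)).succAbove (0 : Fin (n + 1)).succAbove).det := by
  have key := adj_const A hA h1 j i
  rw [Matrix.adjugate_fin_succ_eq_det_submatrix, Matrix.adjugate_fin_succ_eq_det_submatrix] at key
  simp only [Fin.val_zero, pow_zero, one_mul, Nat.add_zero, add_zero] at key
  rw [← key, ← mul_assoc, ← pow_add,
    Even.neg_one_pow ⟨(i : ℕ) + (j : ℕ), rfl⟩, one_mul]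
end

section
/- Let Q be a real v×s matrix with s ≥ v−1, Qᵀ 1_v = 0_s, and rank(Q) = v−1. Then the uniform design w̄ = (1/v,…,1/v) minimizes the pseudo-determinant Det(Qᵀ diag(w)⁻¹ Q) over all designs w on v treatments; that is, Det(Qᵀ diag(w)⁻¹ Q) ≥ Det(Qᵀ diag(w̄)⁻¹ Q) for every design w. -/
open Matrix Polynomial

/-- The pseudo-determinant of a matrix: the product of the nonzero roots of its
characteristic polynomial, counted with algebraic multiplicity. For a real symmetric
positive semidefinite matrix (whose characteristic polynomial splits over ℝ) this is
the product of its nonzero eigenvalues with algebraic multiplicity. -/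
noncomputable def pseudoDet {n : ℕ} (A : Matrix (Fin n) (Fin n) ℝ) : ℝ :=
  (A.charpoly.roots.filter (fun r => r ≠ 0)).prod

/-! Since the columns of `Q` sum to zero, `Q = H Q₀`, where `Q₀` is `Q` without its last row
and the columns of `H = contrastBasis n` are `e_j - e_last`; hence `Qᵀ D⁻¹ Q = Q₀ᵀ (Hᵀ D⁻¹ H) Q₀`
for `D = diag w`. The nonzero roots of the characteristic polynomials of `AB` and `BA` agree, and
`Q₀ Q₀ᵀ (Hᵀ D⁻¹ H)` is invertible because `Q₀` has full row rank `v - 1`, so the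
pseudo-determinant is `det (Q₀ Q₀ᵀ) · det (Hᵀ D⁻¹ H)`. By the matrix determinant lemma
`det (Hᵀ D⁻¹ H) = (∑ w) / ∏ w`, which for a design is `1 / ∏ w`, and AM-GM shows that `∏ w` is
largest at the uniform design. -/

lemma pseudoDet_mul_eq_det_mul_comm {m n : ℕ} (A : Matrix (Fin m) (Fin n) ℝ)
    (B : Matrix (Fin n) (Fin m) ℝ) (hAB : (A * B).charpoly.Splits) (hBA : (B * A).det ≠ 0) :
    pseudoDet (A * B) = (B * A).det := by
  have hcomm := charpoly_mul_comm' A B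
  simp only [Fintype.card_fin] at hcomm
  have hzero : ¬ (B * A).charpoly.IsRoot 0 := by
    rw [IsRoot, ← coeff_zero_eq_eval_zero]
    intro h
    exact hBA (by rw [det_eq_sign_charpoly_coeff, h, mul_zero])
  have hsplit : (B * A).charpoly.Splits := by
    refine ((Splits.X_pow n).mul hAB).of_dvd ?_ (hcomm ▸ dvd_mul_left _ _)
    exact mul_ne_zero (pow_ne_zero _ X_ne_zero) (charpoly_monic _).ne_zero
  have hnonzero : (B * A).charpoly.roots.filter (· ≠ 0) = (B * A).charpoly.roots :=
    Multiset.filter_eq_self.mpr fun r hr => by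
      rintro rfl
      exact hzero (isRoot_of_mem_roots hr)
  have hroots := congrArg (fun p => p.roots.filter (· ≠ 0)) hcomm
  simp only [roots_mul (mul_ne_zero (pow_ne_zero _ X_ne_zero) (charpoly_monic _).ne_zero),
    roots_X_pow, Multiset.filter_add, Multiset.filter_nsmul, Multiset.filter_singleton,
    ne_eq, not_true_eq_false, if_false, Multiset.empty_eq_zero, nsmul_zero, zero_add] at hroots
  rw [pseudoDet, hroots, hnonzero, det_eq_prod_roots_charpoly_of_splits hsplit]

lemma prod_le_sum_div_card_pow {ι : Type*} [Fintype ι] (w : ι → ℝ) (hw : ∀ i, 0 ≤ w i) :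
    ∏ i, w i ≤ ((∑ i, w i) / Fintype.card ι) ^ Fintype.card ι := by
  set N := Fintype.card ι
  rcases Nat.eq_zero_or_pos N with hN | hN
  · simp [Fintype.card_eq_zero_iff.mp hN, hN]
  have hN' : (N : ℝ) ≠ 0 := by positivity
  have hamgm := Real.geom_mean_le_arith_mean_weighted Finset.univ (fun _ => (N : ℝ)⁻¹) w
    (fun _ _ => by positivity) (by simp [N, hN']) (fun i _ => hw i)
  rw [Real.finsetProd_rpow _ _ (fun i _ => hw i), ← Finset.mul_sum, inv_mul_eq_div] at hamgm
  calc ∏ i, w i = ((∏ i, w i) ^ (N⁻¹ : ℝ)) ^ N :=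
        (Real.rpow_inv_natCast_pow (Finset.prod_nonneg fun i _ => hw i) hN.ne').symm
    _ ≤ ((∑ i, w i) / N) ^ N := by
      gcongr
      exact Real.rpow_nonneg (Finset.prod_nonneg fun i _ => hw i) _

lemma inv_diagonal_of_ne_zero {ι K : Type*} [Fintype ι] [DecidableEq ι] [Field K] (d : ι → K)
    (hd : ∀ i, d i ≠ 0) : (diagonal d)⁻¹ = diagonal fun i => (d i)⁻¹ :=
  inv_eq_left_inv <| by
    rw [diagonal_mul_diagonal, ← diagonal_one]
    exact congrArg diagonal (funext fun i => inv_mul_cancel₀ (hd i))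

lemma det_diagonal_add_const {ι K : Type*} [Fintype ι] [DecidableEq ι] [Field K] (d : ι → K)
    (hd : ∀ i, d i ≠ 0) (c : K) :
    det (diagonal d + of fun _ _ => c) = (∏ i, d i) * (1 + c * ∑ i, (d i)⁻¹) := by
  have hJ : replicateCol Unit (fun _ => c) * replicateRow Unit (fun _ => (1 : K))
      = (of fun _ _ => c : Matrix ι ι K) := by
    ext; simp [mul_apply]
  rw [← hJ, det_add_replicateCol_mul_replicateRow (by simp [Finset.prod_ne_zero_iff, hd]),
    inv_diagonal_of_ne_zero d hd, det_diagonal]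
  simp [mul_apply, replicateRow, replicateCol, Finset.mul_sum, mul_comm, diagonal_apply]

lemma isUnit_of_rank_eq {m : ℕ} {K : Type*} [Field K] (A : Matrix (Fin m) (Fin m) K)
    (h : A.rank = m) : IsUnit A := by
  refine mulVec_surjective_iff_isUnit.mp fun y => ?_
  have : LinearMap.range A.mulVecLin = ⊤ :=
    Submodule.eq_top_of_finrank_eq (by rw [Module.finrank_fin_fun]; exact h)
  exact LinearMap.range_eq_top.mp this y

lemma det_mul_transpose_pos_of_rank_eq {m k : ℕ} (A : Matrix (Fin m) (Fin k) ℝ)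
    (h : A.rank = m) : 0 < (A * Aᵀ).det := by
  have hpsd : (A * Aᵀ).PosSemidef := by
    simpa [conjTranspose_eq_transpose_of_trivial] using posSemidef_self_mul_conjTranspose A
  have hunit := isUnit_of_rank_eq (A * Aᵀ) (by rw [rank_self_mul_transpose, h])
  exact hpsd.det_nonneg.lt_of_ne ((isUnit_iff_isUnit_det _).mp hunit).ne_zero.symm

def contrastBasis (n : ℕ) : Matrix (Fin (n + 1)) (Fin n) ℝ :=
  of fun i j => (if i = j.castSucc then 1 else 0) - if i = Fin.last n then 1 else 0

lemma contrastBasis_mul_submatrix_castSucc {n s : ℕ} (Q : Matrix (Fin (n + 1)) (Fin s) ℝ)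
    (hQ1 : Qᵀ *ᵥ (fun _ => (1 : ℝ)) = 0) :
    contrastBasis n * Q.submatrix Fin.castSucc id = Q := by
  ext i k
  have hcol : ∑ j : Fin n, Q j.castSucc k = -Q (Fin.last n) k := by
    have := congrFun hQ1 k
    simp only [mulVec, dotProduct, transpose_apply, mul_one, Pi.zero_apply,
      Fin.sum_univ_castSucc] at this
    linarith
  simp only [contrastBasis, mul_apply, of_apply, submatrix_apply, id, sub_mul, ite_mul, one_mul,
    zero_mul, Finset.sum_sub_distrib]
  rcases Fin.eq_castSucc_or_eq_last i with ⟨i, rfl⟩ | rfl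
  · simp [Fin.castSucc_ne_last]
  · simp [hcol, (Fin.castSucc_ne_last _).symm]

lemma rank_submatrix_castSucc {n s : ℕ} (Q : Matrix (Fin (n + 1)) (Fin s) ℝ)
    (hQ1 : Qᵀ *ᵥ (fun _ => (1 : ℝ)) = 0) (hrank : Q.rank = n) :
    (Q.submatrix Fin.castSucc id).rank = n :=
  le_antisymm (rank_le_height _) <| by
    conv_lhs => rw [← hrank, ← contrastBasis_mul_submatrix_castSucc Q hQ1]
    exact rank_mul_le_right _ _

lemma contrastBasis_transpose_mul_diagonal_mul {n : ℕ} (u : Fin (n + 1) → ℝ) :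
    (contrastBasis n)ᵀ * diagonal u * contrastBasis n
      = diagonal (fun j => u j.castSucc) + of fun _ _ => u (Fin.last n) := by
  ext j j'
  simp [contrastBasis, mul_apply, diagonal_apply, Fin.castSucc_ne_last,
    (Fin.castSucc_ne_last _).symm, ite_mul, mul_ite, sub_mul, mul_sub, eq_comm (a := j')]
  split_ifs with h <;> simp [h]

lemma det_contrastBasis_transpose_mul_diagonal_inv_mul {n : ℕ} (w : Fin (n + 1) → ℝ)
    (hw : ∀ i, w i ≠ 0) :
    det ((contrastBasis n)ᵀ * (diagonal w)⁻¹ * contrastBasis n) = (∑ i, w i) / ∏ i, w i := by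
  rw [inv_diagonal_of_ne_zero w hw, contrastBasis_transpose_mul_diagonal_mul,
    det_diagonal_add_const _ (fun j => inv_ne_zero (hw _))]
  have hlast := hw (Fin.last n)
  have hprod : ∏ j : Fin n, w j.castSucc ≠ 0 := Finset.prod_ne_zero_iff.mpr fun j _ => hw _
  simp only [inv_inv, Fin.prod_univ_castSucc, Fin.sum_univ_castSucc, Finset.prod_inv_distrib]
  field_simp
  ring

lemma pseudoDet_transpose_mul_diagonal_inv_mul {n s : ℕ} (Q : Matrix (Fin (n + 1)) (Fin s) ℝ)
    (hQ1 : Qᵀ *ᵥ (fun _ => (1 : ℝ)) = 0) (hrank : Q.rank = n) (w : Fin (n + 1) → ℝ)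
    (hw : ∀ i, 0 < w i) :
    pseudoDet (Qᵀ * (diagonal w)⁻¹ * Q) = (∑ i, w i) / (∏ i, w i) *
      det (Q.submatrix Fin.castSucc id * (Q.submatrix Fin.castSucc id)ᵀ) := by
  set Q₀ := Q.submatrix Fin.castSucc id
  set K := (contrastBasis n)ᵀ * (diagonal w)⁻¹ * contrastBasis n
  have hK : K.det = (∑ i, w i) / ∏ i, w i :=
    det_contrastBasis_transpose_mul_diagonal_inv_mul w fun i => (hw i).ne'
  have hfac : Qᵀ * (diagonal w)⁻¹ * Q = (Q₀ᵀ * K) * Q₀ := by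
    conv_lhs => rw [← contrastBasis_mul_submatrix_castSucc Q hQ1]
    simp only [Q₀, K, transpose_mul, Matrix.mul_assoc]
  have hherm : (Qᵀ * (diagonal w)⁻¹ * Q).IsHermitian := by
    simpa [conjTranspose_eq_transpose_of_trivial, inv_diagonal_of_ne_zero w fun i => (hw i).ne']
      using isHermitian_conjTranspose_mul_mul Q (isHermitian_diagonal fun i => (w i)⁻¹)
  have hdet : (Q₀ * (Q₀ᵀ * K)).det = (Q₀ * Q₀ᵀ).det * K.det := by
    rw [← Matrix.mul_assoc, det_mul]
  have hGram : 0 < (Q₀ * Q₀ᵀ).det :=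
    det_mul_transpose_pos_of_rank_eq Q₀ (rank_submatrix_castSucc Q hQ1 hrank)
  have hK0 : K.det ≠ 0 := by
    rw [hK]
    exact (div_pos (Finset.sum_pos (fun i _ => hw i) Finset.univ_nonempty)
      (Finset.prod_pos fun i _ => hw i)).ne'
  rw [hfac] at hherm ⊢
  rw [pseudoDet_mul_eq_det_mul_comm _ _ hherm.splits_charpoly
    (hdet ▸ mul_ne_zero hGram.ne' hK0), hdet, hK, mul_comm]

theorem stmt_4_general (v s : ℕ) (Q : Matrix (Fin v) (Fin s) ℝ)
    (hQ1 : Qᵀ *ᵥ (fun _ => (1 : ℝ)) = 0) (hrank : Q.rank = v - 1)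
    (w : Fin v → ℝ) (hw : ∀ i, 0 < w i) (hw1 : ∑ i, w i = 1) :
    pseudoDet (Qᵀ * (Matrix.diagonal w)⁻¹ * Q)
      ≥ pseudoDet (Qᵀ * (Matrix.diagonal (fun _ : Fin v => (v : ℝ)⁻¹))⁻¹ * Q) := by
  obtain _ | n := v
  · simp at hw1
  replace hrank : Q.rank = n := by simpa using hrank
  have hformula := pseudoDet_transpose_mul_diagonal_inv_mul Q hQ1 hrank
  have hGram := det_mul_transpose_pos_of_rank_eq _ (rank_submatrix_castSucc Q hQ1 hrank)
  have hamgm := prod_le_sum_div_card_pow w fun i => (hw i).le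
  rw [ge_iff_le, hformula w hw, hformula _ fun _ => by positivity, hw1]
  refine mul_le_mul_of_nonneg_right ?_ hGram.le
  rw [hw1, Fintype.card_fin, one_div] at hamgm
  simp only [Finset.sum_const, Finset.prod_const, Finset.card_univ, Fintype.card_fin, nsmul_eq_mul,
    mul_inv_cancel₀ (Nat.cast_ne_zero.mpr n.succ_ne_zero : ((n + 1 : ℕ) : ℝ) ≠ 0)]
  exact one_div_le_one_div_of_le (Finset.prod_pos fun i _ => hw i) hamgm

/-- For a contrast matrix `Q` with `s ≥ v - 1` columns and `rank Q = v - 1`,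
the uniform design minimizes the pseudo-determinant of `Qᵀ diag(w)⁻¹ Q` over all designs:
`Det(Qᵀ diag(w)⁻¹ Q) ≥ Det(Qᵀ diag(w̄)⁻¹ Q)` for every design `w`. -/
theorem stmt_4 (v s : ℕ) (hs : v - 1 ≤ s) (Q : Matrix (Fin v) (Fin s) ℝ)
    (hQ1 : Qᵀ *ᵥ (fun _ => (1 : ℝ)) = 0) (hrank : Q.rank = v - 1)
    (w : Fin v → ℝ) (hw : ∀ i, 0 < w i) (hw1 : ∑ i, w i = 1) :
    pseudoDet (Qᵀ * (Matrix.diagonal w)⁻¹ * Q)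
      ≥ pseudoDet (Qᵀ * (Matrix.diagonal (fun _ : Fin v => (v : ℝ)⁻¹))⁻¹ * Q) :=
  stmt_4_general v s Q hQ1 hrank w hw hw1
end

section
/- Let Q be the coefficient matrix of a system of s pairwise comparisons on v treatments, with every degree d_i ≥ 1. Then for every design w on v treatments, tr(Qᵀ diag(w)⁻¹ Q) = Σ_{i=1}^v w_i⁻¹ d_i, and this quantity is minimized over all designs uniquely at the design w* with w*_i = √d_i / Σ_{j=1}^v √d_j. -/
/-!
Since every entry of `Q` is `0` or `±1`, the `i`-th diagonal entry of `Q Qᵀ` is the degree `dᵢ`,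
so `tr(Qᵀ diag(w)⁻¹ Q) = tr(Q Qᵀ diag(w)⁻¹) = Σ dᵢ / wᵢ`. Writing `cᵢ = √dᵢ` and `S = Σ cᵢ`,
the identity `cᵢ² / wᵢ = wᵢ (cᵢ / wᵢ - S)² + 2 S cᵢ - S² wᵢ` summed over `i` under `Σ wᵢ = 1` gives
`Σ cᵢ² / wᵢ = Σ wᵢ (cᵢ / wᵢ - S)² + S²`, whose first summand vanishes exactly at `w = c / S`.
-/

open Matrix Finset

namespace Matrix

theorem inv_diagonal_of_ne_zero {n K : Type*} [Fintype n] [DecidableEq n] [Field K]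
    {u : n → K} (hu : ∀ i, u i ≠ 0) : (diagonal u)⁻¹ = diagonal u⁻¹ :=
  inv_eq_right_inv <| by
    rw [diagonal_mul_diagonal, ← diagonal_one]
    exact congrArg diagonal (funext fun i => mul_inv_cancel₀ (hu i))

theorem trace_transpose_mul_diagonal_mul {m n R : Type*} [Fintype m] [Fintype n]
    [DecidableEq m] [CommSemiring R] (Q : Matrix m n R) (u : m → R) :
    (Qᵀ * diagonal u * Q).trace = ∑ i, u i * ∑ k, Q i k ^ 2 := by
  simp only [trace, diag_apply, mul_apply, transpose_apply, diagonal_apply, mul_ite, mul_zero,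
    sum_ite_eq', mem_univ, if_true, mul_sum]
  rw [sum_comm]
  exact sum_congr rfl fun i _ => sum_congr rfl fun k _ => by ring

end Matrix

theorem Finset.sum_sq_eq_card_filter_ne_zero {ι R : Type*} [Fintype ι] [Ring R] [DecidableEq R]
    {f : ι → R} (hf : ∀ k, f k = 0 ∨ f k = 1 ∨ f k = -1) :
    ∑ k, f k ^ 2 = (univ.filter fun k => f k ≠ 0).card := by
  rw [natCast_card_filter]
  refine sum_congr rfl fun k _ => ?_
  rcases hf k with h | h | h <;> simp [h]

section WeightedSquares

variable {ι : Type*} [Fintype ι] {w : ι → ℝ}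

theorem sum_inv_mul_sq_eq_sum_mul_sq_add (c : ι → ℝ) (hw : ∀ i, w i ≠ 0) (hw1 : ∑ i, w i = 1) :
    ∑ i, (w i)⁻¹ * c i ^ 2 = ∑ i, w i * (c i / w i - ∑ j, c j) ^ 2 + (∑ j, c j) ^ 2 := by
  set S := ∑ j, c j
  have hterm : ∀ i, (w i)⁻¹ * c i ^ 2 = w i * (c i / w i - S) ^ 2 + 2 * S * c i - S ^ 2 * w i :=
    fun i => by have := hw i; field_simp; ring
  rw [sum_congr rfl fun i _ => hterm i, sum_sub_distrib, sum_add_distrib, ← mul_sum, ← mul_sum,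
    hw1]
  ring

theorem sum_inv_mul_sq_of_proportional (c : ι → ℝ) :
    ∑ i, (c i / ∑ j, c j)⁻¹ * c i ^ 2 = (∑ j, c j) ^ 2 := by
  have hterm : ∀ i, (c i / ∑ j, c j)⁻¹ * c i ^ 2 = (∑ j, c j) * c i := fun i => by
    rcases eq_or_ne (c i) 0 with h | h
    · simp [h]
    · rw [inv_div]; field_simp
  rw [sum_congr rfl fun i _ => hterm i, ← mul_sum, sq]

theorem sq_sum_lt_sum_inv_mul_sq {c : ι → ℝ} (hw : ∀ i, 0 < w i) (hw1 : ∑ i, w i = 1)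
    (hc : ∑ j, c j ≠ 0) (hne : w ≠ fun i => c i / ∑ j, c j) :
    (∑ j, c j) ^ 2 < ∑ i, (w i)⁻¹ * c i ^ 2 := by
  rw [sum_inv_mul_sq_eq_sum_mul_sq_add c (fun i => (hw i).ne') hw1]
  obtain ⟨i, hi⟩ := Function.ne_iff.mp hne
  have hi' : c i / w i - ∑ j, c j ≠ 0 := fun h => hi <| by
    rw [sub_eq_zero, div_eq_iff (hw i).ne'] at h
    rw [h, mul_div_cancel_left₀ _ hc]
  refine lt_add_of_pos_left _ (sum_pos' (fun j _ => by have := hw j; positivity) ⟨i, mem_univ i, ?_⟩)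
  exact mul_pos (hw i) (sq_pos_of_ne_zero hi')

end WeightedSquares

theorem stmt_7_general (v s : ℕ) (Q : Matrix (Fin v) (Fin s) ℝ) (a b : Fin s → Fin v)
    (hQ : ∀ i k, Q i k = if i = a k then 1 else if i = b k then -1 else 0)
    (hd : ∀ i : Fin v, 1 ≤ (Finset.univ.filter fun k => Q i k ≠ 0).card) :
    let d : Fin v → ℕ := fun i => (Finset.univ.filter fun k => Q i k ≠ 0).card
    let wstar : Fin v → ℝ := fun i => Real.sqrt (d i) / ∑ j, Real.sqrt (d j)
    (∀ w : Fin v → ℝ, (∀ i, 0 < w i) → ∑ i, w i = 1 →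
        (Qᵀ * (Matrix.diagonal w)⁻¹ * Q).trace = ∑ i, (w i)⁻¹ * (d i : ℝ)) ∧
    (∀ w : Fin v → ℝ, (∀ i, 0 < w i) → ∑ i, w i = 1 → w ≠ wstar →
        (Qᵀ * (Matrix.diagonal w)⁻¹ * Q).trace
          > (Qᵀ * (Matrix.diagonal wstar)⁻¹ * Q).trace) := by
  intro d wstar
  have hentries : ∀ i k, Q i k = 0 ∨ Q i k = 1 ∨ Q i k = -1 := fun i k => by
    rw [hQ]; split_ifs <;> simp
  have htrace : ∀ u : Fin v → ℝ, (∀ i, u i ≠ 0) →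
      (Qᵀ * (diagonal u)⁻¹ * Q).trace = ∑ i, (u i)⁻¹ * (d i : ℝ) := fun u hu => by
    rw [inv_diagonal_of_ne_zero hu, trace_transpose_mul_diagonal_mul]
    simp only [Pi.inv_apply, sum_sq_eq_card_filter_ne_zero fun k => hentries _ k, d]
  set c : Fin v → ℝ := fun i => Real.sqrt (d i)
  have hc : ∀ i, 0 < c i := fun i => Real.sqrt_pos.2 (by exact_mod_cast hd i)
  have hS : ∀ i : Fin v, 0 < ∑ j, c j := fun i => sum_pos (fun j _ => hc j) ⟨i, mem_univ i⟩
  have hd_eq : ∀ u : Fin v → ℝ, ∑ i, (u i)⁻¹ * (d i : ℝ) = ∑ i, (u i)⁻¹ * c i ^ 2 :=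
    fun u => sum_congr rfl fun i _ => by rw [Real.sq_sqrt (Nat.cast_nonneg _)]
  have hwstar : ∑ i, (wstar i)⁻¹ * c i ^ 2 = (∑ j, c j) ^ 2 := sum_inv_mul_sq_of_proportional c
  refine ⟨fun w hw _ => htrace w fun i => (hw i).ne', fun w hw hw1 hne => ?_⟩
  obtain ⟨i₀, -⟩ := Function.ne_iff.mp hne
  rw [htrace w fun i => (hw i).ne', htrace wstar fun i => (div_pos (hc i) (hS i)).ne', hd_eq,
    hd_eq, hwstar]
  exact sq_sum_lt_sum_inv_mul_sq hw hw1 (hS i₀).ne' hne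

/-- Let `Q` be the coefficient matrix of a system of `s` pairwise
comparisons on `v` treatments (each column has exactly one entry `+1`, one entry `-1`,
all other entries `0`), with every degree `d_i ≥ 1` (`d_i` = number of nonzero entries
of row `i`). Then for every design `w`, `tr(Qᵀ diag(w)⁻¹ Q) = Σ_i w_i⁻¹ d_i`, and this
is minimized over all designs uniquely at `w*_i = √d_i / Σ_j √d_j`. -/
theorem stmt_7 (v s : ℕ) (Q : Matrix (Fin v) (Fin s) ℝ) (a b : Fin s → Fin v)
    (hab : ∀ k, a k ≠ b k)
    (hQ : ∀ i k, Q i k = if i = a k then 1 else if i = b k then -1 else 0)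
    (hd : ∀ i : Fin v, 1 ≤ (Finset.univ.filter fun k => Q i k ≠ 0).card) :
    let d : Fin v → ℕ := fun i => (Finset.univ.filter fun k => Q i k ≠ 0).card
    let wstar : Fin v → ℝ := fun i => Real.sqrt (d i) / ∑ j, Real.sqrt (d j)
    (∀ w : Fin v → ℝ, (∀ i, 0 < w i) → ∑ i, w i = 1 →
        (Qᵀ * (Matrix.diagonal w)⁻¹ * Q).trace = ∑ i, (w i)⁻¹ * (d i : ℝ)) ∧
    (∀ w : Fin v → ℝ, (∀ i, 0 < w i) → ∑ i, w i = 1 → w ≠ wstar →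
        (Qᵀ * (Matrix.diagonal w)⁻¹ * Q).trace
          > (Qᵀ * (Matrix.diagonal wstar)⁻¹ * Q).trace) :=
  stmt_7_general v s Q a b hQ hd
end

section
/- Let Q be the coefficient matrix of a system of s pairwise comparisons on v treatments with all degrees d_i ≥ 1, and suppose every treatment is a sink or a source, i.e., for each row i of Q all nonzero entries have the same sign. Define the design w* by w*_i = d_i/(2s). Then the all-ones vector 1_s is an eigenvector of V_Q(w*) = Qᵀ diag(w*)⁻¹ Q with eigenvalue 4s, and λ_max(V_Q(w*)) = 4s. -/
open Matrix

/-- Let `Q` be the coefficient matrix of a system of `s` pairwise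
comparisons on `v ≥ 1` treatments with all degrees `d_i ≥ 1`, in which every treatment
is a sink or a source (for each row, all nonzero entries have the same sign, i.e., no
row carries both a `+1` and a `-1`). For the design `w*_i = d_i/(2s)`, the all-ones
vector is an eigenvector of `V_Q(w*) = Qᵀ diag(w*)⁻¹ Q` with eigenvalue `4s`, and
`λ_max(V_Q(w*)) = 4s`. -/
theorem stmt_12 (v s : ℕ) (hv : 0 < v) (Q : Matrix (Fin v) (Fin s) ℝ)
    (a b : Fin s → Fin v) (hab : ∀ k, a k ≠ b k)
    (hQ : ∀ i k, Q i k = if i = a k then 1 else if i = b k then -1 else 0)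
    (hd : ∀ i : Fin v, 1 ≤ (Finset.univ.filter fun k => Q i k ≠ 0).card)
    (hss : ∀ i : Fin v, (∀ k, a k ≠ i) ∨ (∀ k, b k ≠ i)) :
    let d : Fin v → ℕ := fun i => (Finset.univ.filter fun k => Q i k ≠ 0).card
    let wstar : Fin v → ℝ := fun i => (d i : ℝ) / (2 * (s : ℝ))
    (Qᵀ * (Matrix.diagonal wstar)⁻¹ * Q) *ᵥ (fun _ => (1 : ℝ))
        = (4 * (s : ℝ)) • (fun _ => (1 : ℝ)) ∧
    IsGreatest {r : ℝ | ∃ x : Fin s → ℝ, x ≠ 0 ∧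
        (Qᵀ * (Matrix.diagonal wstar)⁻¹ * Q) *ᵥ x = r • x} (4 * (s : ℝ)) := by
  intro d wstar
  -- basic positivity facts
  have i0 : Fin v := ⟨0, hv⟩
  have hs : 0 < s := by
    by_contra h
    push_neg at h
    interval_cases s
    have := hd i0
    simp at this
  have hsR : (0 : ℝ) < (s : ℝ) := by exact_mod_cast hs
  have hdpos : ∀ i, (0 : ℝ) < (d i : ℝ) := by
    intro i
    exact_mod_cast hd i
  have hwpos : ∀ i, 0 < wstar i := fun i => div_pos (hdpos i) (by linarith)
  -- the inverse of the diagonal matrix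
  set c : Fin v → ℝ := fun i => (wstar i)⁻¹ with hc
  have hDinv : (Matrix.diagonal wstar)⁻¹ = Matrix.diagonal c := by
    apply Matrix.inv_eq_right_inv
    rw [Matrix.diagonal_mul_diagonal]
    have hfc : (fun i => wstar i * c i) = fun _ => (1:ℝ) :=
      funext fun i => mul_inv_cancel₀ (ne_of_gt (hwpos i))
    rw [hfc, Matrix.diagonal_one]
  have hcd : ∀ i, c i * (d i : ℝ) = 2 * (s : ℝ) := by
    intro i
    have hdne : (d i : ℝ) ≠ 0 := ne_of_gt (hdpos i)
    simp only [hc, wstar]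
    field_simp
  have hcpos : ∀ i, 0 < c i := fun i => inv_pos.mpr (hwpos i)
  -- values of Q
  have hQa : ∀ k, Q (a k) k = 1 := fun k => by rw [hQ]; simp
  have hQb : ∀ k, Q (b k) k = -1 := fun k => by
    rw [hQ]; simp [Ne.symm (hab k)]
  -- row sums
  have hrow_src : ∀ i, (∀ k, b k ≠ i) → ∀ x : Fin s → ℝ,
      ∑ k, Q i k * x k = ∑ k ∈ Finset.univ.filter (fun k => Q i k ≠ 0), x k := by
    intro i hi x
    rw [Finset.sum_filter]
    congr 1
    funext k
    rw [hQ]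
    rcases eq_or_ne i (a k) with h | h
    · simp [h, hQ, (hab k).symm]
    · have : i ≠ b k := fun h' => hi k h'.symm
      simp [h, this, hQ]
  have hrow_snk : ∀ i, (∀ k, a k ≠ i) → ∀ x : Fin s → ℝ,
      ∑ k, Q i k * x k = -∑ k ∈ Finset.univ.filter (fun k => Q i k ≠ 0), x k := by
    intro i hi x
    rw [Finset.sum_filter, ← Finset.sum_neg_distrib]
    congr 1
    funext k
    rw [hQ]
    rcases eq_or_ne i (b k) with h | h
    · have : i ≠ a k := fun h' => hi k h'.symm
      simp [h, this, hQ, Ne.symm (hab k)]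
    · have : i ≠ a k := fun h' => hi k h'.symm
      simp [h, this, hQ]
  -- sum over just two indices
  have pair_sum : ∀ (k : Fin s) (g : Fin v → ℝ), (∀ i, i ≠ a k → i ≠ b k → g i = 0) →
      ∑ i, g i = g (a k) + g (b k) := by
    intro k g hg
    rw [← Finset.sum_subset (Finset.subset_univ {a k, b k})]
    · rw [Finset.sum_pair (hab k)]
    · intro i _ hi
      simp only [Finset.mem_insert, Finset.mem_singleton] at hi
      push_neg at hi
      exact hg i hi.1 hi.2
  -- the quadratic form identity
  have hquad : ∀ x : Fin s → ℝ,
      x ⬝ᵥ ((Qᵀ * (Matrix.diagonal wstar)⁻¹ * Q) *ᵥ x)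
        = ∑ i, c i * ((Q *ᵥ x) i) ^ 2 := by
    intro x
    rw [hDinv, Matrix.mul_assoc, ← Matrix.mulVec_mulVec, ← Matrix.mulVec_mulVec,
      Matrix.dotProduct_mulVec, Matrix.vecMul_transpose]
    simp only [dotProduct, Matrix.mulVec_diagonal]
    congr 1
    funext i
    ring
  -- the mulVec expansion
  have hmv : ∀ x : Fin s → ℝ, ∀ k : Fin s,
      (((Qᵀ * (Matrix.diagonal wstar)⁻¹ * Q) *ᵥ x)) k
        = ∑ i, Q i k * (c i * ∑ l, Q i l * x l) := by
    intro x k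
    rw [hDinv, Matrix.mul_assoc, ← Matrix.mulVec_mulVec, ← Matrix.mulVec_mulVec]
    have hdg : Matrix.diagonal c *ᵥ (Q *ᵥ x) = fun i => c i * (Q *ᵥ x) i := by
      funext i
      rw [Matrix.mulVec_diagonal]
    rw [hdg]
    simp only [Matrix.mulVec, dotProduct, Matrix.transpose_apply]
  -- sources and sinks
  have hsrc_a : ∀ k, ∀ k', b k' ≠ a k := by
    intro k
    rcases hss (a k) with h | h
    · exact absurd rfl (h k)
    · exact h
  have hsnk_b : ∀ k, ∀ k', a k' ≠ b k := by
    intro k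
    rcases hss (b k) with h | h
    · exact h
    · exact absurd rfl (h k)
  -- Part 1
  have part1 : (Qᵀ * (Matrix.diagonal wstar)⁻¹ * Q) *ᵥ (fun _ => (1 : ℝ))
      = (4 * (s : ℝ)) • (fun _ => (1 : ℝ)) := by
    funext k
    rw [hmv]
    have hsum : ∀ i, (∑ l, Q i l * (1 : ℝ)) = ∑ l, Q i l := by
      intro i; simp
    have key : ∑ i, Q i k * (c i * ∑ l, Q i l * (1:ℝ))
        = Q (a k) k * (c (a k) * (d (a k) : ℝ))
          + Q (b k) k * (c (b k) * (-(d (b k) : ℝ))) := by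
      have ha : (∑ l, Q (a k) l * (1:ℝ)) = (d (a k) : ℝ) := by
        rw [hrow_src (a k) (hsrc_a k)]
        simp [d]
      have hb : (∑ l, Q (b k) l * (1:ℝ)) = -(d (b k) : ℝ) := by
        rw [hrow_snk (b k) (hsnk_b k)]
        simp [d]
      rw [pair_sum k _ ?_]
      · rw [ha, hb]
      · intro i hia hib
        have : Q i k = 0 := by rw [hQ]; simp [hia, hib]
        simp [this]
    rw [key, hQa, hQb]
    simp only [Pi.smul_apply, smul_eq_mul]
    rw [show (1:ℝ) * (c (a k) * (d (a k) : ℝ)) + -1 * (c (b k) * -(d (b k) : ℝ))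
        = c (a k) * (d (a k) : ℝ) + c (b k) * (d (b k) : ℝ) from by ring, hcd, hcd]
    ring
  refine ⟨part1, ⟨fun _ => (1:ℝ), ?_, part1⟩, ?_⟩
  · intro h
    have := congrFun h ⟨0, hs⟩
    simp at this
  · rintro r ⟨x, hx, hVx⟩
    have hxx : 0 < ∑ k, x k ^ 2 := by
      obtain ⟨k0, hk0⟩ := Function.ne_iff.mp hx
      have : (0:ℝ) < x k0 ^ 2 := sq_pos_of_ne_zero hk0
      exact lt_of_lt_of_le this (Finset.single_le_sum (fun k _ => sq_nonneg (x k))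
        (Finset.mem_univ k0))
    have hA : r * ∑ k, x k ^ 2 = ∑ i, c i * ((Q *ᵥ x) i) ^ 2 := by
      rw [← hquad x, hVx]
      simp only [dotProduct, Pi.smul_apply, smul_eq_mul]
      rw [Finset.mul_sum]
      congr 1
      funext k
      ring
    -- bound each row's contribution
    have hrowbound : ∀ i, c i * ((Q *ᵥ x) i) ^ 2
        ≤ 2 * (s:ℝ) * ∑ k ∈ Finset.univ.filter (fun k => Q i k ≠ 0), x k ^ 2 := by
      intro i
      have hsq : ((Q *ᵥ x) i) ^ 2
          = (∑ k ∈ Finset.univ.filter (fun k => Q i k ≠ 0), x k) ^ 2 := by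
        rcases hss i with h | h
        · have := hrow_snk i h x
          simp only [Matrix.mulVec, dotProduct]
          rw [this, neg_sq]
        · have := hrow_src i h x
          simp only [Matrix.mulVec, dotProduct]
          rw [this]
      rw [hsq]
      calc c i * (∑ k ∈ Finset.univ.filter (fun k => Q i k ≠ 0), x k) ^ 2
          ≤ c i * ((d i : ℝ) * ∑ k ∈ Finset.univ.filter (fun k => Q i k ≠ 0), x k ^ 2) := by
            apply mul_le_mul_of_nonneg_left _ (le_of_lt (hcpos i))
            have := sq_sum_le_card_mul_sum_sq
              (s := Finset.univ.filter (fun k => Q i k ≠ 0)) (f := x)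
            exact_mod_cast this
        _ = 2 * (s:ℝ) * ∑ k ∈ Finset.univ.filter (fun k => Q i k ≠ 0), x k ^ 2 := by
            rw [← mul_assoc, hcd]
    -- double counting
    have hdouble : ∑ i, ∑ k ∈ Finset.univ.filter (fun k => Q i k ≠ 0), x k ^ 2
        = 2 * ∑ k, x k ^ 2 := by
      have : ∀ i, ∑ k ∈ Finset.univ.filter (fun k => Q i k ≠ 0), x k ^ 2
          = ∑ k, if Q i k ≠ 0 then x k ^ 2 else 0 := by
        intro i; rw [Finset.sum_filter]
      simp only [this]
      rw [Finset.sum_comm]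
      rw [Finset.mul_sum]
      congr 1
      funext k
      rw [pair_sum k _ ?_]
      · have h1 : Q (a k) k ≠ 0 := by rw [hQa]; norm_num
        have h2 : Q (b k) k ≠ 0 := by rw [hQb]; norm_num
        simp [h1, h2]
        ring
      · intro i hia hib
        have : Q i k = 0 := by rw [hQ]; simp [hia, hib]
        simp [this]
    have hbound : ∑ i, c i * ((Q *ᵥ x) i) ^ 2 ≤ 4 * (s:ℝ) * ∑ k, x k ^ 2 := by
      calc ∑ i, c i * ((Q *ᵥ x) i) ^ 2
          ≤ ∑ i, 2 * (s:ℝ) * ∑ k ∈ Finset.univ.filter (fun k => Q i k ≠ 0), x k ^ 2 :=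
            Finset.sum_le_sum (fun i _ => hrowbound i)
        _ = 2 * (s:ℝ) * ∑ i, ∑ k ∈ Finset.univ.filter (fun k => Q i k ≠ 0), x k ^ 2 := by
            rw [Finset.mul_sum]
        _ = 4 * (s:ℝ) * ∑ k, x k ^ 2 := by rw [hdouble]; ring
    have : r * ∑ k, x k ^ 2 ≤ 4 * (s:ℝ) * ∑ k, x k ^ 2 := hA ▸ hbound
    exact le_of_mul_le_mul_right (by linarith [this]) hxx
end

section
/- Let Q be the coefficient matrix of a system of s pairwise comparisons on v treatments, and suppose there exists a cyclic permutation π of {1,…,v} (a permutation consisting of a single cycle of length v) whose permutation matrix P satisfies P Q Qᵀ Pᵀ = Q Qᵀ. Let Φ be a design criterion for Q. Then the uniform design w̄ = (1/v,…,1/v) satisfies Φ(w̄) ≥ Φ(w) for every design w on v treatments. -/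
open Matrix Polynomial

set_option synthInstance.maxHeartbeats 1000000
set_option maxHeartbeats 1000000


/-- A design on a finite set of treatments: strictly positive weights summing to one. -/
def IsDesign {ι : Type*} [Fintype ι] (w : ι → ℝ) : Prop :=
  (∀ i, 0 < w i) ∧ ∑ i, w i = 1

lemma aux_det_comm {K : Type*} [Field K] {m n : Type*} [Fintype m] [Fintype n]
    [DecidableEq m] [DecidableEq n] (x : K) (hx : x ≠ 0)
    (A : Matrix m n K) (B : Matrix n m K) :
    x ^ (Fintype.card n) * (x • (1 : Matrix m m K) - A * B).det
      = x ^ (Fintype.card m) * (x • (1 : Matrix n n K) - B * A).det := by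
  have e1 : x • (1 : Matrix m m K) - A * B
      = x • ((1 : Matrix m m K) + (-(x⁻¹) • A) * B) := by
    rw [Matrix.smul_mul, smul_add, smul_smul, mul_neg, mul_inv_cancel₀ hx, neg_smul, one_smul,
      sub_eq_add_neg]
  have e2 : x • (1 : Matrix n n K) - B * A
      = x • ((1 : Matrix n n K) + B * (-(x⁻¹) • A)) := by
    rw [Matrix.mul_smul, smul_add, smul_smul, mul_neg, mul_inv_cancel₀ hx, neg_smul, one_smul,
      sub_eq_add_neg]
  rw [e1, e2, Matrix.det_smul, Matrix.det_smul, Matrix.det_one_add_mul_comm]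
  ring

lemma aux_charpoly_map {p : Type*} [Fintype p] [DecidableEq p] (M : Matrix p p ℝ) :
    (algebraMap ℝ[X] (RatFunc ℝ)) M.charpoly
      = ((algebraMap ℝ[X] (RatFunc ℝ)) Polynomial.X • (1 : Matrix p p (RatFunc ℝ))
          - M.map ((algebraMap ℝ[X] (RatFunc ℝ)).comp (C : ℝ →+* ℝ[X]))).det := by
  set f : ℝ[X] →+* RatFunc ℝ := (algebraMap ℝ[X] (RatFunc ℝ) : ℝ[X] →+* RatFunc ℝ) with hfdef
  rw [Matrix.charpoly, RingHom.map_det, RingHom.mapMatrix_apply]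
  have hm : (charmatrix M).map f
      = f X • (1 : Matrix p p (RatFunc ℝ)) - M.map (f.comp (C : ℝ →+* ℝ[X])) := by
    apply Matrix.ext
    intro i j
    by_cases h : i = j <;>
      simp [h, charmatrix_apply, Matrix.one_apply, Matrix.diagonal_apply]
  rw [hm]

lemma aux_charpoly {m n : Type*} [Fintype m] [Fintype n] [DecidableEq m] [DecidableEq n]
    (A : Matrix m n ℝ) (B : Matrix n m ℝ) :
    (X : ℝ[X]) ^ (Fintype.card n) * (A * B).charpoly
      = (X : ℝ[X]) ^ (Fintype.card m) * (B * A).charpoly := by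
  set f : ℝ[X] →+* RatFunc ℝ := (algebraMap ℝ[X] (RatFunc ℝ) : ℝ[X] →+* RatFunc ℝ) with hfdef
  have hf : Function.Injective f := IsFractionRing.injective _ _
  apply hf
  have hx : f X ≠ 0 := fun h => X_ne_zero (hf (by simpa using h))
  set g : ℝ →+* RatFunc ℝ := f.comp (C : ℝ →+* ℝ[X]) with hgdef
  rw [_root_.map_mul, _root_.map_mul, map_pow, map_pow, aux_charpoly_map (A * B),
    aux_charpoly_map (B * A)]
  have hAB : (A * B).map g = A.map g * B.map g := Matrix.map_mul
  have hBA : (B * A).map g = B.map g * A.map g := Matrix.map_mul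
  rw [hAB, hBA]
  exact aux_det_comm (f X) hx (A.map g) (B.map g)

lemma perm_charpoly {v s : ℕ} (Q : Matrix (Fin v) (Fin s) ℝ) (σ : Equiv.Perm (Fin v))
    (hG : (Q * Qᵀ).submatrix σ σ = Q * Qᵀ) (d : Fin v → ℝ) :
    (Qᵀ * Matrix.diagonal (fun i => d (σ i)) * Q).charpoly
      = (Qᵀ * Matrix.diagonal d * Q).charpoly := by
  classical
  set R : Matrix (Fin v) (Fin s) ℝ := Q.submatrix σ.symm id with hR
  have entry : ∀ (u : Fin v → ℝ) (S : Matrix (Fin v) (Fin s) ℝ) (k l : Fin s),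
      (Sᵀ * Matrix.diagonal u * S) k l = ∑ i, S i k * u i * S i l := by
    intro u S k l
    rw [Matrix.mul_assoc, Matrix.mul_apply]
    refine Finset.sum_congr rfl fun i _ => ?_
    rw [Matrix.diagonal_mul, Matrix.transpose_apply]
    ring
  have h1 : Qᵀ * Matrix.diagonal (fun i => d (σ i)) * Q = Rᵀ * Matrix.diagonal d * R := by
    apply Matrix.ext
    intro k l
    rw [entry, entry]
    exact Fintype.sum_equiv σ _ _ (fun i => by simp [hR])
  have hG' : (Q * Qᵀ).submatrix ⇑σ.symm ⇑σ.symm = Q * Qᵀ := by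
    conv_lhs => rw [← hG]
    rw [Matrix.submatrix_submatrix, Equiv.self_comp_symm, Matrix.submatrix_id_id]
  have h2 : R * Rᵀ = Q * Qᵀ := by
    apply Matrix.ext
    intro i j
    have h := Matrix.ext_iff.2 hG' i j
    simp only [Matrix.submatrix_apply] at h
    simp only [hR, Matrix.mul_apply, Matrix.transpose_apply, Matrix.submatrix_apply, id] at h ⊢
    exact h
  have key1 := aux_charpoly (Rᵀ * Matrix.diagonal d) R
  have key2 := aux_charpoly (Qᵀ * Matrix.diagonal d) Q
  have h3 : R * (Rᵀ * Matrix.diagonal d) = Q * (Qᵀ * Matrix.diagonal d) := by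
    rw [← Matrix.mul_assoc, ← Matrix.mul_assoc, h2]
  rw [h3] at key1
  rw [h1]
  apply mul_left_cancel₀ (pow_ne_zero (Fintype.card (Fin v)) (X_ne_zero : (X : ℝ[X]) ≠ 0))
  rw [key1, key2]

/-- Let `Q` be the coefficient matrix of a system of pairwise comparisons
on `v` treatments and suppose a cyclic permutation `π` of the treatments (a single cycle
of length `v`, i.e., every treatment is mapped to every other by some power of `π`)
has permutation matrix `P` with `P Q Qᵀ Pᵀ = Q Qᵀ`. Then for every design criterion `Φ`
for `Q` (concave on designs and depending on a design only through the characteristic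
polynomial of `V_Q(w) = Qᵀ diag(w)⁻¹ Q`), the uniform design `w̄ = (1/v, …, 1/v)`
satisfies `Φ(w̄) ≥ Φ(w)` for every design `w`. -/
theorem stmt_14 (v s : ℕ) (Q : Matrix (Fin v) (Fin s) ℝ)
    (a b : Fin s → Fin v) (hab : ∀ k, a k ≠ b k)
    (hQ : ∀ i k, Q i k = if i = a k then 1 else if i = b k then -1 else 0)
    (π : Equiv.Perm (Fin v))
    (hcyc : ∀ i j : Fin v, ∃ m : ℕ, (π ^ m) i = j)
    (P : Matrix (Fin v) (Fin v) ℝ)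
    (hP : P = Matrix.of fun i j => if π j = i then (1 : ℝ) else 0)
    (hPQ : P * (Q * Qᵀ) * Pᵀ = Q * Qᵀ)
    (Φ : (Fin v → ℝ) → ℝ)
    (hconc : ∀ w w' : Fin v → ℝ, IsDesign w → IsDesign w' →
        ∀ t : ℝ, 0 ≤ t → t ≤ 1 →
          t * Φ w + (1 - t) * Φ w' ≤ Φ (t • w + (1 - t) • w'))
    (hinv : ∀ w w' : Fin v → ℝ, IsDesign w → IsDesign w' →
        (Qᵀ * (Matrix.diagonal w)⁻¹ * Q).charpoly
          = (Qᵀ * (Matrix.diagonal w')⁻¹ * Q).charpoly → Φ w = Φ w') :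
    ∀ w : Fin v → ℝ, IsDesign w → Φ w ≤ Φ (fun _ => (v : ℝ)⁻¹) := by
  classical
  intro w hw
  rcases Nat.eq_zero_or_pos v with hv | hv
  · exfalso
    subst hv
    have := hw.2
    simp at this
  -- translate hPQ into a submatrix statement
  have hPmul : ∀ (M : Matrix (Fin v) (Fin v) ℝ) (i l : Fin v),
      (P * M) i l = M (π.symm i) l := by
    intro M i l
    rw [hP, Matrix.mul_apply, Finset.sum_eq_single (π.symm i)]
    · simp
    · intro k _ hk
      rw [Matrix.of_apply, if_neg, zero_mul]
      intro hc
      exact hk (by rw [← hc]; simp)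
    · simp
  have hmulPt : ∀ (M : Matrix (Fin v) (Fin v) ℝ) (i l : Fin v),
      (M * Pᵀ) i l = M i (π.symm l) := by
    intro M i l
    rw [hP, Matrix.mul_apply, Finset.sum_eq_single (π.symm l)]
    · simp
    · intro k _ hk
      rw [Matrix.transpose_apply, Matrix.of_apply, if_neg, mul_zero]
      intro hc
      exact hk (by rw [← hc]; simp)
    · simp
  have hGsub : (Q * Qᵀ).submatrix ⇑π ⇑π = Q * Qᵀ := by
    apply Matrix.ext
    intro i j
    have h := Matrix.ext_iff.2 hPQ (π i) (π j)
    rw [hmulPt, hPmul] at h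
    simpa using h.symm
  have hGpow : ∀ m : ℕ, (Q * Qᵀ).submatrix ⇑(π ^ m) ⇑(π ^ m) = Q * Qᵀ := by
    intro m
    induction m with
    | zero => simp
    | succ k ih =>
      have hc : ⇑(π ^ (k + 1)) = ⇑(π ^ k) ∘ ⇑π := by
        funext x
        simp [pow_succ]
      rw [hc, ← Matrix.submatrix_submatrix, ih, hGsub]
  -- cyclicity facts
  have hfix : ∀ (d : ℕ) (i : Fin v), (π ^ d) i = i → π ^ d = 1 := by
    intro d i hi
    ext j
    obtain ⟨m, hm⟩ := hcyc i j
    have hcomm : (π ^ d) ((π ^ m) i) = (π ^ m) ((π ^ d) i) := by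
      rw [← Equiv.Perm.mul_apply, ← Equiv.Perm.mul_apply, pow_mul_comm]
    simp only [Equiv.Perm.coe_one, id_eq]
    rw [← hm, hcomm, hi]
  have horder : v ≤ orderOf π := by
    have i0 : Fin v := ⟨0, hv⟩
    have hsurj : Function.Surjective (fun m : Fin (orderOf π) => (π ^ (m : ℕ)) i0) := by
      intro j
      obtain ⟨m, hm⟩ := hcyc i0 j
      exact ⟨⟨m % orderOf π, Nat.mod_lt _ (orderOf_pos π)⟩, by simp [pow_mod_orderOf, hm]⟩
    simpa using Fintype.card_le_of_surjective _ hsurj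
  have hinj : ∀ i : Fin v, Function.Injective (fun m : Fin v => (π ^ (m : ℕ)) i) := by
    intro i
    have key : ∀ m k : ℕ, m ≤ k → k < v → (π ^ m) i = (π ^ k) i → m = k := by
      intro m k hmk hkv he
      by_contra hne
      have hd : 0 < k - m := by omega
      have hfixe : (π ^ (k - m)) ((π ^ m) i) = (π ^ m) i := by
        rw [← Equiv.Perm.mul_apply, ← pow_add]
        have : k - m + m = k := by omega
        rw [this, ← he]
      have h1 : π ^ (k - m) = 1 := hfix _ _ hfixe
      have h2 : orderOf π ≤ k - m := Nat.le_of_dvd hd (orderOf_dvd_of_pow_eq_one h1)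
      omega
    intro m k hmk
    simp only at hmk
    rcases le_total (m : ℕ) (k : ℕ) with h | h
    · exact Fin.ext (key _ _ h k.isLt hmk)
    · exact (Fin.ext (key _ _ h m.isLt hmk.symm)).symm
  have hsum1 : ∀ (i : Fin v) (g : Fin v → ℝ), ∑ m : Fin v, g ((π ^ (m : ℕ)) i) = ∑ j, g j := by
    intro i g
    exact Fintype.sum_bijective _ (Finite.injective_iff_bijective.mp (hinj i)) _ _ fun m => rfl
  -- the permuted designs
  set u : ℕ → Fin v → ℝ := fun m i => w ((π ^ m) i) with hu
  have hud : ∀ m, IsDesign (u m) := by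
    intro m
    refine ⟨fun i => hw.1 _, ?_⟩
    rw [← hw.2]
    exact Fintype.sum_bijective _ (π ^ m).bijective _ _ fun i => rfl
  have hdiaginv : ∀ (d : Fin v → ℝ), (∀ i, d i ≠ 0) →
      (Matrix.diagonal d)⁻¹ = Matrix.diagonal (fun i => (d i)⁻¹) := by
    intro d hd
    apply Matrix.inv_eq_right_inv
    rw [Matrix.diagonal_mul_diagonal]
    have : (fun i => d i * (d i)⁻¹) = fun _ : Fin v => (1 : ℝ) := by
      funext i
      exact mul_inv_cancel₀ (hd i)
    rw [this, Matrix.diagonal_one]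
  have huΦ : ∀ m, Φ (u m) = Φ w := by
    intro m
    apply hinv _ _ (hud m) hw
    have h1 : (Matrix.diagonal (u m))⁻¹
        = Matrix.diagonal (fun i => (fun j => (w j)⁻¹) ((π ^ m) i)) :=
      hdiaginv (u m) fun i => ne_of_gt ((hud m).1 i)
    have h2 : (Matrix.diagonal w)⁻¹ = Matrix.diagonal (fun j => (w j)⁻¹) :=
      hdiaginv w fun i => ne_of_gt (hw.1 i)
    rw [h1, h2]
    exact perm_charpoly Q (π ^ m) (hGpow m) (fun j => (w j)⁻¹)
  -- averaging / Jensen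
  set A : ℕ → Fin v → ℝ := fun k i => (k : ℝ)⁻¹ * ∑ m ∈ Finset.range k, u m i with hA
  have hAdesign : ∀ k : ℕ, IsDesign (A (k + 1)) := by
    intro k
    constructor
    · intro i
      apply mul_pos
      · positivity
      · apply Finset.sum_pos
        · intro m _
          exact (hud m).1 i
        · exact ⟨0, by simp⟩
    · rw [hA]
      simp only
      rw [← Finset.mul_sum, Finset.sum_comm]
      have : ∀ m ∈ Finset.range (k + 1), ∑ i, u m i = 1 := fun m _ => (hud m).2
      rw [Finset.sum_congr rfl this, Finset.sum_const, Finset.card_range]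
      simp
      rw [inv_mul_cancel₀]
      positivity
  have hstep : ∀ k : ℕ, Φ w ≤ Φ (A (k + 1)) := by
    intro k
    induction k with
    | zero =>
      have h0 : A 1 = w := by
        funext i
        simp [hA, hu]
      rw [h0]
    | succ k ih =>
      set t : ℝ := (k + 1) / (k + 2) with ht
      have ht0 : (0 : ℝ) ≤ t := by positivity
      have ht1 : t ≤ 1 := by
        rw [ht, div_le_one (by positivity)]
        linarith
      have hcomb : A (k + 2) = t • A (k + 1) + (1 - t) • u (k + 1) := by
        funext i
        simp only [hA, ht, Pi.add_apply, Pi.smul_apply, smul_eq_mul]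
        rw [Finset.sum_range_succ]
        have hk1 : ((k : ℝ) + 1) ≠ 0 := by positivity
        have hk2 : ((k : ℝ) + 2) ≠ 0 := by positivity
        push_cast
        field_simp
        ring
      have := hconc (A (k + 1)) (u (k + 1)) (hAdesign k) (hud (k + 1)) t ht0 ht1
      rw [← hcomb] at this
      have hΦu : Φ (u (k + 1)) = Φ w := huΦ (k + 1)
      calc Φ w = t * Φ w + (1 - t) * Φ w := by ring
        _ ≤ t * Φ (A (k + 1)) + (1 - t) * Φ (u (k + 1)) := by
            rw [hΦu]
            have h1t : (0:ℝ) ≤ 1 - t := by linarith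
            nlinarith [mul_le_mul_of_nonneg_left ih ht0]
        _ ≤ Φ (A (k + 2)) := this
  -- conclude
  have hAv : A v = fun _ : Fin v => (v : ℝ)⁻¹ := by
    funext i
    have hsum : ∑ m ∈ Finset.range v, u m i = 1 := by
      rw [Finset.sum_range fun m => u m i]
      calc ∑ m : Fin v, u (↑m) i = ∑ j, w j := hsum1 i w
        _ = 1 := hw.2
    simp [hA, hsum]
  have hfin := hstep (v - 1)
  have hv1 : v - 1 + 1 = v := by omega
  rw [hv1, hAv] at hfin
  exact hfin
end

section
/- Let Q be a real v×s matrix with Qᵀ 1_v = 0_s (a cyclic system of contrasts), and suppose there exists a cyclic permutation π of {1,…,v} (a permutation consisting of a single cycle of length v) whose permutation matrix P satisfies P Q Qᵀ Pᵀ = Q Qᵀ. Let Φ be a design criterion for Q. Then the uniform design w̄ = (1/v,…,1/v) satisfies Φ(w̄) ≥ Φ(w) for every design w on v treatments. -/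
/-!
Relabelling the treatments along `π` turns `V_Q(w ∘ π)` into `V_{PQ}(w)`. Since
`PQ (PQ)ᵀ = QQᵀ`, Sylvester's identity `Xᵐ χ(AᵀDA) = Xⁿ χ(DAAᵀ)` shows that the characteristic
polynomial does not change, so `Φ` is constant on the orbit of `w` under `π`. By concavity
(Jensen), `Φ` of the orbit average is at least `Φ w`. The orbit average is `π`-invariant, hence
constant because `π` acts transitively, hence uniform.
-/

open Matrix

open Polynomial Equiv Finset

namespace Matrix

variable {m n R : Type*} [Fintype m] [CommRing R]

theorem transpose_mul_submatrix_mul (Q : Matrix m n R) (σ : Perm m) (D : Matrix m m R) :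
    Qᵀ * D.submatrix σ σ * Q = (Q.submatrix σ.symm id)ᵀ * D * Q.submatrix σ.symm id := by
  ext k l
  simp only [mul_apply, transpose_apply, submatrix_apply, id, Finset.sum_mul]
  refine Fintype.sum_equiv σ _ _ fun j => Fintype.sum_equiv σ _ _ fun i => ?_
  simp

variable [DecidableEq m]

theorem of_perm_mul_mul_transpose (π : Perm m) (M : Matrix m m R) :
    (of fun i j => if π j = i then (1 : R) else 0) * M *
        (of fun i j => if π j = i then (1 : R) else 0)ᵀ = M.submatrix π.symm π.symm := by
  ext i j
  simp [mul_apply, ← Equiv.eq_symm_apply]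

variable [Fintype n] [DecidableEq n]

theorem charpoly_transpose_mul_mul_eq_of_mul_transpose_eq {A B : Matrix m n R}
    (h : A * Aᵀ = B * Bᵀ) (D : Matrix m m R) :
    (Aᵀ * D * A).charpoly = (Bᵀ * D * B).charpoly := by
  have hDA : D * A * Aᵀ = D * B * Bᵀ := by rw [Matrix.mul_assoc, h, Matrix.mul_assoc]
  refine (isRegular_X_pow (Fintype.card m)).left.eq_iff.mp ?_
  rw [Matrix.mul_assoc, Matrix.mul_assoc, charpoly_mul_comm' Aᵀ, charpoly_mul_comm' Bᵀ, hDA]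

theorem charpoly_transpose_mul_submatrix_mul_eq {Q : Matrix m n R} {σ : Perm m}
    (hQ : (Q * Qᵀ).submatrix σ.symm σ.symm = Q * Qᵀ) (D : Matrix m m R) :
    (Qᵀ * D.submatrix σ σ * Q).charpoly = (Qᵀ * D * Q).charpoly := by
  rw [transpose_mul_submatrix_mul]
  refine charpoly_transpose_mul_mul_eq_of_mul_transpose_eq ?_ D
  rw [← hQ, transpose_submatrix, submatrix_mul _ _ _ _ _ Function.bijective_id]

theorem charpoly_transpose_mul_inv_diagonal_comp_mul_eq {Q : Matrix m n R} {σ : Perm m}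
    (hQ : (Q * Qᵀ).submatrix σ.symm σ.symm = Q * Qᵀ) (w : m → R) :
    (Qᵀ * (diagonal (w ∘ σ))⁻¹ * Q).charpoly = (Qᵀ * (diagonal w)⁻¹ * Q).charpoly := by
  rw [← submatrix_diagonal_equiv, inv_submatrix_equiv,
    charpoly_transpose_mul_submatrix_mul_eq hQ]

end Matrix

section OrbitAverage

variable {ι : Type*} (σ : Perm ι) (w : ι → ℝ)

noncomputable def orbitAverage : ι → ℝ :=
  ∑ k ∈ range (orderOf σ), (orderOf σ : ℝ)⁻¹ • (w ∘ ⇑(σ ^ k))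

theorem orbitAverage_comp_perm : orbitAverage σ w ∘ σ = orbitAverage σ w := by
  funext i
  simp only [orbitAverage, Function.comp_apply, Finset.sum_apply, Pi.smul_apply]
  set f : ℕ → ℝ := fun k => (orderOf σ : ℝ)⁻¹ • w ((σ ^ k) i)
  have hperiod : f (orderOf σ) = f 0 := by simp [f, pow_orderOf_eq_one]
  have hshift : ∀ k, (orderOf σ : ℝ)⁻¹ • w ((σ ^ k) (σ i)) = f (k + 1) := by
    intro k; simp [f, pow_succ]
  simp only [hshift]
  rw [← add_left_inj (f 0), ← sum_range_succ', sum_range_succ, hperiod]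

variable [Fintype ι]

theorem sum_range_orderOf_inv : ∑ _k ∈ range (orderOf σ), (orderOf σ : ℝ)⁻¹ = 1 := by
  rw [sum_const, card_range, nsmul_eq_mul, mul_inv_cancel₀]
  exact_mod_cast (orderOf_pos σ).ne'

theorem ConcaveOn.le_orbitAverage {s : Set (ι → ℝ)} {Φ : (ι → ℝ) → ℝ} (hΦ : ConcaveOn ℝ s Φ)
    (hs : ∀ w ∈ s, w ∘ σ ∈ s) (hσ : ∀ w ∈ s, Φ (w ∘ σ) = Φ w) (hw : w ∈ s) :
    Φ w ≤ Φ (orbitAverage σ w) := by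
  have hiter : ∀ k : ℕ, w ∘ ⇑(σ ^ k) ∈ s ∧ Φ (w ∘ ⇑(σ ^ k)) = Φ w := by
    intro k
    induction k with
    | zero => exact ⟨hw, rfl⟩
    | succ k ih =>
      rw [pow_succ, Perm.coe_mul, ← Function.comp_assoc]
      exact ⟨hs _ ih.1, (hσ _ ih.1).trans ih.2⟩
  calc Φ w = ∑ k ∈ range (orderOf σ), (orderOf σ : ℝ)⁻¹ • Φ (w ∘ ⇑(σ ^ k)) := by
        simp only [(hiter _).2, ← sum_smul, sum_range_orderOf_inv, one_smul]
    _ ≤ Φ (orbitAverage σ w) :=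
        hΦ.le_map_sum (fun _ _ => by positivity) (sum_range_orderOf_inv σ) fun k _ => (hiter k).1

end OrbitAverage

section IsDesign

variable {ι : Type*} [Fintype ι]

theorem convex_setOf_isDesign : Convex ℝ {w : ι → ℝ | IsDesign w} := by
  intro x hx y hy a b ha hb hab
  refine ⟨fun i => ?_, ?_⟩
  · rcases ha.eq_or_lt with rfl | ha
    · simpa [show b = 1 by linarith] using hy.1 i
    · simp only [Pi.add_apply, Pi.smul_apply, smul_eq_mul]
      nlinarith [hx.1 i, hy.1 i]
  · simp only [Pi.add_apply, Pi.smul_apply, smul_eq_mul, sum_add_distrib, ← mul_sum, hx.2, hy.2,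
      hab, mul_one]

theorem IsDesign.comp_perm {w : ι → ℝ} (hw : IsDesign w) (σ : Perm ι) : IsDesign (w ∘ σ) :=
  ⟨fun i => hw.1 (σ i), (Equiv.sum_comp σ w).trans hw.2⟩

theorem IsDesign.orbitAverage {w : ι → ℝ} (hw : IsDesign w) (σ : Perm ι) :
    IsDesign (orbitAverage σ w) :=
  convex_setOf_isDesign.sum_mem (fun _ _ => by positivity) (sum_range_orderOf_inv σ)
    fun k _ => hw.comp_perm (σ ^ k)

theorem IsDesign.eq_uniform_of_comp_perm_eq {u : ι → ℝ} (hu : IsDesign u) {σ : Perm ι}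
    (hσ : ∀ i j, ∃ m : ℕ, (σ ^ m) i = j) (h : u ∘ σ = u) :
    u = fun _ => (Fintype.card ι : ℝ)⁻¹ := by
  have hconst : ∀ i j, u j = u i := by
    intro i j
    obtain ⟨m, rfl⟩ := hσ i j
    induction m with
    | zero => rfl
    | succ m ih => rw [pow_succ', Perm.coe_mul, ← ih]; exact congrFun h _
  funext j
  refine (inv_eq_of_mul_eq_one_right ?_).symm
  rw [← hu.2, ← nsmul_eq_mul, ← card_univ, ← sum_const]
  exact sum_congr rfl fun i _ => hconst i j

end IsDesign

theorem stmt_15_general (v s : ℕ) (Q : Matrix (Fin v) (Fin s) ℝ)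
    (π : Equiv.Perm (Fin v))
    (hcyc : ∀ i j : Fin v, ∃ m : ℕ, (π ^ m) i = j)
    (P : Matrix (Fin v) (Fin v) ℝ)
    (hP : P = Matrix.of fun i j => if π j = i then (1 : ℝ) else 0)
    (hPQ : P * (Q * Qᵀ) * Pᵀ = Q * Qᵀ)
    (Φ : (Fin v → ℝ) → ℝ)
    (hconc : ∀ w w' : Fin v → ℝ, IsDesign w → IsDesign w' →
        ∀ t : ℝ, 0 ≤ t → t ≤ 1 →
          t * Φ w + (1 - t) * Φ w' ≤ Φ (t • w + (1 - t) • w'))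
    (hinv : ∀ w w' : Fin v → ℝ, IsDesign w → IsDesign w' →
        (Qᵀ * (Matrix.diagonal w)⁻¹ * Q).charpoly
          = (Qᵀ * (Matrix.diagonal w')⁻¹ * Q).charpoly → Φ w = Φ w') :
    ∀ w : Fin v → ℝ, IsDesign w → Φ w ≤ Φ (fun _ => (v : ℝ)⁻¹) := by
  intro w hw
  have hΦ : ConcaveOn ℝ {w | IsDesign w} Φ := by
    refine ⟨convex_setOf_isDesign, fun x hx y hy a b ha _ hab => ?_⟩
    obtain rfl : b = 1 - a := by linarith
    exact hconc x y hx hy a ha (by linarith)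
  have hQ : (Q * Qᵀ).submatrix π.symm π.symm = Q * Qᵀ := by
    rw [← of_perm_mul_mul_transpose, ← hP, hPQ]
  have hΦπ : ∀ w ∈ {w | IsDesign w}, Φ (w ∘ π) = Φ w := fun w hw =>
    hinv _ _ (hw.comp_perm π) hw (charpoly_transpose_mul_inv_diagonal_comp_mul_eq hQ w)
  calc Φ w ≤ Φ (orbitAverage π w) := hΦ.le_orbitAverage π w (fun w hw => hw.comp_perm π) hΦπ hw
    _ = Φ (fun _ => (v : ℝ)⁻¹) := by
      rw [(hw.orbitAverage π).eq_uniform_of_comp_perm_eq hcyc (orbitAverage_comp_perm π w),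
        Fintype.card_fin]

/-- Let `Q` be a matrix of contrasts (`Qᵀ 1 = 0`) forming a cyclic system:
some cyclic permutation `π` of the `v` treatments (a single cycle of length `v`, i.e.,
every treatment is mapped to every other by some power of `π`) has permutation matrix
`P` with `P Q Qᵀ Pᵀ = Q Qᵀ`. Then for every design criterion `Φ` for `Q` (concave on
designs and depending on a design only through the characteristic polynomial of
`V_Q(w) = Qᵀ diag(w)⁻¹ Q`), the uniform design `w̄ = (1/v, …, 1/v)` satisfies
`Φ(w̄) ≥ Φ(w)` for every design `w`. -/
theorem stmt_15 (v s : ℕ) (Q : Matrix (Fin v) (Fin s) ℝ)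
    (hQ1 : Qᵀ *ᵥ (fun _ => (1 : ℝ)) = 0)
    (π : Equiv.Perm (Fin v))
    (hcyc : ∀ i j : Fin v, ∃ m : ℕ, (π ^ m) i = j)
    (P : Matrix (Fin v) (Fin v) ℝ)
    (hP : P = Matrix.of fun i j => if π j = i then (1 : ℝ) else 0)
    (hPQ : P * (Q * Qᵀ) * Pᵀ = Q * Qᵀ)
    (Φ : (Fin v → ℝ) → ℝ)
    (hconc : ∀ w w' : Fin v → ℝ, IsDesign w → IsDesign w' →
        ∀ t : ℝ, 0 ≤ t → t ≤ 1 →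
          t * Φ w + (1 - t) * Φ w' ≤ Φ (t • w + (1 - t) • w'))
    (hinv : ∀ w w' : Fin v → ℝ, IsDesign w → IsDesign w' →
        (Qᵀ * (Matrix.diagonal w)⁻¹ * Q).charpoly
          = (Qᵀ * (Matrix.diagonal w')⁻¹ * Q).charpoly → Φ w = Φ w') :
    ∀ w : Fin v → ℝ, IsDesign w → Φ w ≤ Φ (fun _ => (v : ℝ)⁻¹) :=
  stmt_15_general v s Q π hcyc P hP hPQ Φ hconc hinv
end
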